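/- Let V be a finite-dimensional real vector space, dim_ℝ V = m, and let K ⊆ 𝕋V be an isotropic subspace with dim_ℝ K = r, K^⊥ its orthogonal in 𝕋V, and J : K^⊥/K → K^⊥/K an ℝ-linear map with J² = −id and ⟨Ju, v⟩ + ⟨u, Jv⟩ = 0 for the pairing induced on K^⊥/K. Then there exists a unique lagrangian subspace L ⊆ 𝕋_ℂV such that L ∩ L̄ = K_ℂ (the complexification of K) and, under the canonical map (K^⊥)_ℂ → (K^⊥/K)_ℂ, the image of L equals the +i-eigenspace of the complexification of J; in particular L has real index r. -/

import Mathlib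

open TensorProduct Module

noncomputable section

namespace CDirac


/-- The real generalized tangent space `V ⊕ V*`. -/
abbrev TR (V : Type*) [AddCommGroup V] [Module ℝ V] := V × (V →ₗ[ℝ] ℝ)

variable {V : Type*} [AddCommGroup V] [Module ℝ V]

/-- The canonical pairing `⟨X+ξ, Y+η⟩ = (η X + ξ Y)/2` on `𝕋V`. -/
def pairR (a b : TR V) : ℝ := (b.2 a.1 + a.2 b.1) / 2

lemma pairR_add_left (a a' b : TR V) : pairR (a + a') b = pairR a b + pairR a' b := by
  simp only [pairR, Prod.fst_add, Prod.snd_add, map_add, LinearMap.add_apply]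
  ring

lemma pairR_smul_left (c : ℝ) (a b : TR V) : pairR (c • a) b = c * pairR a b := by
  simp only [pairR, Prod.smul_fst, Prod.smul_snd, map_smul, LinearMap.smul_apply,
    smul_eq_mul]
  ring

/-- Orthogonal complement with respect to the pairing on `𝕋V`. -/
def orthR (L : Submodule ℝ (TR V)) : Submodule ℝ (TR V) where
  carrier := {a | ∀ b ∈ L, pairR a b = 0}
  zero_mem' := fun b _ => by simp [pairR]
  add_mem' := fun {a a'} ha ha' b hb => by
    rw [pairR_add_left, ha b hb, ha' b hb, add_zero]
  smul_mem' := fun c a ha b hb => by rw [pairR_smul_left, ha b hb, mul_zero]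

/-- A real lagrangian subspace: `L = L^⊥`. -/
def IsLagrangianR (L : Submodule ℝ (TR V)) : Prop := L = orthR L

/-- An isotropic subspace of `𝕋V`. -/
def IsIsotropicR (K : Submodule ℝ (TR V)) : Prop := ∀ a ∈ K, ∀ b ∈ K, pairR a b = 0

instance instAddCommGroupOrthR (K : Submodule ℝ (TR V)) : AddCommGroup ↥(orthR K) :=
  Submodule.addCommGroup _

/-- The quotient `K^⊥/K`. -/
abbrev quotK (K : Submodule ℝ (TR V)) := ↥(orthR K) ⧸ (K.comap (orthR K).subtype)

/-- The quotient map `K^⊥ → K^⊥/K`. -/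
def mkK (K : Submodule ℝ (TR V)) : ↥(orthR K) →ₗ[ℝ] quotK K :=
  (K.comap (orthR K).subtype).mkQ




/-- The complexification `V_ℂ = ℂ ⊗_ℝ V`. -/
abbrev Cx (V : Type*) [AddCommGroup V] [Module ℝ V] := ℂ ⊗[ℝ] V

/-- The complex dual `(V_ℂ)^*`. -/
abbrev DualC (V : Type*) [AddCommGroup V] [Module ℝ V] := Cx V →ₗ[ℂ] ℂ

/-- The complexified generalized tangent space `𝕋_ℂ V = V_ℂ ⊕ (V_ℂ)^*`. -/
abbrev TCx (V : Type*) [AddCommGroup V] [Module ℝ V] := Cx V × DualC V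

/-- The ℂ-bilinear pairing on `𝕋_ℂ V`. -/
def pairC (a b : TCx V) : ℂ := (b.2 a.1 + a.2 b.1) / 2

lemma pairC_add_left (a a' b : TCx V) : pairC (a + a') b = pairC a b + pairC a' b := by
  simp only [pairC, Prod.fst_add, Prod.snd_add, map_add, LinearMap.add_apply]
  ring

lemma pairC_smul_left (c : ℂ) (a b : TCx V) : pairC (c • a) b = c * pairC a b := by
  simp only [pairC, Prod.smul_fst, Prod.smul_snd, map_smul, LinearMap.smul_apply,
    smul_eq_mul]
  ring

/-- Orthogonal complement with respect to the ℂ-bilinear pairing on `𝕋_ℂ V`. -/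
def orthC (L : Submodule ℂ (TCx V)) : Submodule ℂ (TCx V) where
  carrier := {a | ∀ b ∈ L, pairC a b = 0}
  zero_mem' := fun b _ => by simp [pairC]
  add_mem' := fun {a a'} ha ha' b hb => by
    rw [pairC_add_left, ha b hb, ha' b hb, add_zero]
  smul_mem' := fun c a ha b hb => by rw [pairC_smul_left, ha b hb, mul_zero]

/-- A complex lagrangian subspace: `L = L^⊥`. -/
def IsLagrangianC (L : Submodule ℂ (TCx V)) : Prop := L = orthC L

private lemma conjCxAux_smul (z : ℂ) (x : Cx V) :
    TensorProduct.map Complex.conjAe.toLinearMap LinearMap.id (z • x) =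
      starRingEnd ℂ z • TensorProduct.map Complex.conjAe.toLinearMap LinearMap.id x := by
  induction x using TensorProduct.induction_on with
  | zero => simp
  | tmul w v => simp [smul_tmul', smul_eq_mul, Complex.conjAe_coe, map_mul]
  | add x y hx hy => simp only [smul_add, map_add, hx, hy]

/-- Conjugation on `V_ℂ`, as a `conj`-semilinear map. -/
def conjCx : Cx V →ₛₗ[starRingEnd ℂ] Cx V where
  toFun := TensorProduct.map Complex.conjAe.toLinearMap LinearMap.id
  map_add' := map_add _
  map_smul' := conjCxAux_smul

lemma conjCx_smul (z : ℂ) (x : Cx V) :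
    conjCx (z • x) = starRingEnd ℂ z • conjCx x := conjCxAux_smul z x

/-- Conjugation of a complex linear functional. -/
def conjDualFun (ξ : DualC V) : DualC V where
  toFun x := starRingEnd ℂ (ξ (conjCx x))
  map_add' x y := by simp
  map_smul' z x := by
    rw [conjCx_smul, map_smul, smul_eq_mul, map_mul, RingHom.id_apply]
    simp [smul_eq_mul]

/-- Conjugation on `(V_ℂ)^*`, as a `conj`-semilinear map. -/
def conjDual : DualC V →ₛₗ[starRingEnd ℂ] DualC V where
  toFun := conjDualFun
  map_add' ξ η := by ext x; simp [conjDualFun]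
  map_smul' z ξ := by
    ext x
    simp [conjDualFun, smul_eq_mul, map_mul]

/-- Conjugation on `𝕋_ℂ V`, as a `conj`-semilinear map. -/
def conjT : TCx V →ₛₗ[starRingEnd ℂ] TCx V where
  toFun a := (conjCx a.1, conjDual a.2)
  map_add' a b := by simp [Prod.ext_iff]
  map_smul' z a := by
    simp [Prod.ext_iff, Prod.smul_fst, Prod.smul_snd, map_smulₛₗ]

instance : RingHomSurjective (starRingEnd ℂ) :=
  ⟨fun z => ⟨starRingEnd ℂ z, by simp⟩⟩

/-- The conjugate `L̄` of a ℂ-subspace of `𝕋_ℂ V`. -/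
def conjSub (L : Submodule ℂ (TCx V)) : Submodule ℂ (TCx V) := L.map conjT

/-- The conjugate `Ē` of a ℂ-subspace of `V_ℂ`. -/
def conjE (E : Submodule ℂ (Cx V)) : Submodule ℂ (Cx V) := E.map conjCx

/-- The canonical inclusion `V → V_ℂ`, `v ↦ 1 ⊗ v`. -/
def iV : V →ₗ[ℝ] Cx V := TensorProduct.mk ℝ ℂ V 1





/-- ℝ-linear auxiliary version of the ℂ-linear extension of a real functional. -/
def dualExtAux (α : V →ₗ[ℝ] ℝ) : Cx V →ₗ[ℝ] ℂ :=
  TensorProduct.lift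
    (LinearMap.mk₂ ℝ (fun z v => z * (α v : ℂ))
      (fun z w v => by push_cast; ring)
      (fun r z v => by simp only [Complex.real_smul]; ring)
      (fun z v w => by push_cast [map_add]; ring)
      (fun r z v => by simp only [map_smul, smul_eq_mul, Complex.real_smul]; push_cast; ring))

private lemma dualExtAux_smulC (α : V →ₗ[ℝ] ℝ) (z : ℂ) (x : Cx V) :
    dualExtAux α (z • x) = z * dualExtAux α x := by
  induction x using TensorProduct.induction_on with
  | zero => simp
  | tmul w v =>
      simp only [dualExtAux, smul_tmul', lift.tmul, LinearMap.mk₂_apply, smul_eq_mul]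
      ring
  | add x y hx hy => simp only [smul_add, map_add, hx, hy]; ring

/-- The ℂ-linear extension of a real functional `α : V → ℝ` to `V_ℂ`. -/
def dualExtFun (α : V →ₗ[ℝ] ℝ) : DualC V where
  toFun := dualExtAux α
  map_add' := map_add _
  map_smul' z x := by simpa using dualExtAux_smulC α z x

private lemma dualExtFun_tmul (α : V →ₗ[ℝ] ℝ) (z : ℂ) (v : V) :
    dualExtFun α (z ⊗ₜ[ℝ] v) = z * (α v : ℂ) := by
  simp [dualExtFun, dualExtAux]

/-- The ℂ-linear extension map `V^* → (V_ℂ)^*`, as an ℝ-linear map. -/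
def dualExt : (V →ₗ[ℝ] ℝ) →ₗ[ℝ] DualC V where
  toFun := dualExtFun
  map_add' α β := by
    apply LinearMap.ext; intro x
    induction x using TensorProduct.induction_on with
    | zero => simp
    | tmul w v =>
        simp only [dualExtFun_tmul, LinearMap.add_apply]
        push_cast
        ring
    | add x y hx hy =>
        simp only [map_add, LinearMap.add_apply] at *
        rw [hx, hy]
  map_smul' r α := by
    apply LinearMap.ext; intro x
    induction x using TensorProduct.induction_on with
    | zero => simp
    | tmul w v =>
        simp only [dualExtFun_tmul, RingHom.id_apply, LinearMap.smul_apply,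
          LinearMap.smul_apply, smul_eq_mul, Complex.real_smul]
        push_cast
        ring
    | add x y hx hy =>
        simp only [map_add, RingHom.id_apply, LinearMap.smul_apply, smul_eq_mul] at *
        rw [hx, hy]

/-- The canonical inclusion `𝕋V → 𝕋_ℂV`. -/
def iT : TR V →ₗ[ℝ] TCx V where
  toFun a := (iV a.1, dualExt a.2)
  map_add' a b := by simp [Prod.ext_iff]
  map_smul' r a := by simp [Prod.ext_iff]



/-- Auxiliary ℝ-linear version of the ℂ-bilinear extension of a real bilinear form. -/
def bilinExtAux (B : V →ₗ[ℝ] V →ₗ[ℝ] ℝ) : Cx V →ₗ[ℝ] DualC V :=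
  TensorProduct.lift
    (LinearMap.mk₂ ℝ (fun z v => z • dualExt (B v))
      (fun z w v => by simp only [add_smul])
      (fun r z v => by simp only [smul_assoc])
      (fun z v w => by simp only [map_add, smul_add])
      (fun r z v => by simp only [map_smul]; exact smul_comm z r _))

private lemma bilinExtAux_smulC (B : V →ₗ[ℝ] V →ₗ[ℝ] ℝ) (z : ℂ) (x : Cx V) :
    bilinExtAux B (z • x) = z • bilinExtAux B x := by
  induction x using TensorProduct.induction_on with
  | zero => simp
  | tmul w v =>
      simp only [bilinExtAux, smul_tmul', lift.tmul, LinearMap.mk₂_apply, smul_eq_mul,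
        mul_smul]
  | add x y hx hy => simp only [smul_add, map_add, hx, hy]

/-- The ℂ-bilinear extension of a real bilinear form `B : V × V → ℝ` to `V_ℂ`. -/
def bilinExt (B : V →ₗ[ℝ] V →ₗ[ℝ] ℝ) : Cx V →ₗ[ℂ] DualC V where
  toFun := bilinExtAux B
  map_add' := map_add _
  map_smul' z x := by simpa using bilinExtAux_smulC B z x

/-- The `B`-transformation `e^B(X+ξ) = X + ξ + B̃(X,·)` of `𝕋_ℂV`, for a real `B`. -/
def eB (B : V →ₗ[ℝ] V →ₗ[ℝ] ℝ) : TCx V →ₗ[ℂ] TCx V where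
  toFun a := (a.1, a.2 + bilinExt B a.1)
  map_add' a b := by
    simp only [Prod.fst_add, Prod.snd_add, map_add, Prod.mk_add_mk, Prod.mk.injEq]
    exact ⟨trivial, by abel⟩
  map_smul' z a := by
    simp only [Prod.smul_fst, Prod.smul_snd, map_smul, RingHom.id_apply, Prod.smul_mk,
      Prod.mk.injEq, smul_add]

/-- The real `B`-transformation `e^B(X+α) = X + α + B(X,·)` of `𝕋V`. -/
def eBR (B : V →ₗ[ℝ] V →ₗ[ℝ] ℝ) : TR V →ₗ[ℝ] TR V where
  toFun a := (a.1, a.2 + B a.1)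
  map_add' a b := by
    simp only [Prod.fst_add, Prod.snd_add, map_add, Prod.mk_add_mk, Prod.mk.injEq]
    exact ⟨trivial, by abel⟩
  map_smul' r a := by
    simp only [Prod.smul_fst, Prod.smul_snd, map_smul, RingHom.id_apply, Prod.smul_mk,
      Prod.mk.injEq, smul_add]


/-- The range `E = pr_{V_ℂ}(L)` of a subspace of `𝕋_ℂV`. -/
def Esub (L : Submodule ℂ (TCx V)) : Submodule ℂ (Cx V) :=
  L.map (LinearMap.fst ℂ (Cx V) (DualC V))

/-- The real index `r = dim_ℂ (L ∩ L̄)`. -/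
def riL (L : Submodule ℂ (TCx V)) : ℕ := finrank ℂ ↥(L ⊓ conjSub L)

/-- The real part `K = (L ∩ L̄) ∩ 𝕋V`, as a subspace of `𝕋V`. -/
def Ksub (L : Submodule ℂ (TCx V)) : Submodule ℝ (TR V) :=
  ((L ⊓ conjSub L).restrictScalars ℝ).comap iT

/-- The distribution `D = (E + Ē) ∩ V`, as a subspace of `V`. -/
def Dsub (L : Submodule ℂ (TCx V)) : Submodule ℝ V :=
  ((Esub L ⊔ conjE (Esub L)).restrictScalars ℝ).comap iV

/-- The distribution `Δ = (E ∩ Ē) ∩ V`, as a subspace of `V`. -/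
def DeltaSub (L : Submodule ℂ (TCx V)) : Submodule ℝ V :=
  ((Esub L ⊓ conjE (Esub L)).restrictScalars ℝ).comap iV

/-- The order `s = dim V - dim D`. -/
def orderL (L : Submodule ℂ (TCx V)) : ℕ := finrank ℝ V - finrank ℝ ↥(Dsub L)

/-- The (normalized) type `k = dim_ℂ(E + Ē) - dim_ℂ E`. -/
def typeL (L : Submodule ℂ (TCx V)) : ℕ :=
  finrank ℂ ↥(Esub L ⊔ conjE (Esub L)) - finrank ℂ ↥(Esub L)


end CDirac


open CDirac Module

/-!
Write every element of `𝕋_ℂV` as `u + i v` with `u, v ∈ 𝕋V`. For `u, v ∈ K^⊥` the class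
`[u] + i [v]` is a `+i`-eigenvector of `J_ℂ` iff `J[u] = -[v]`, so `L` is forced to be
`{u + i v | u, v ∈ K^⊥, J[u] = -[v]}`: the real and imaginary parts of any element of a
lagrangian containing `K_ℂ` lie in `K^⊥`. This `L` is isotropic because `J` is skew with
`J² = -1`, and coisotropic because the pairing induced on `K^⊥/K` is nondegenerate
(`K^⊥⊥ = K`). An element of `L ∩ L̄` has `J[u] = -[v] = [v]`, so `[v] = 0` and
`[u] = -J²[u] = 0`; hence `L ∩ L̄ = K_ℂ`, of complex dimension `dim_ℝ K`.
-/

namespace CDirac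

variable {V : Type*} [AddCommGroup V] [Module ℝ V]

section RealImaginaryParts

def reV : Cx V →ₗ[ℝ] V :=
  TensorProduct.lift (LinearMap.mk₂ ℝ (fun z v => z.re • v)
    (fun z w v => by simp [add_smul])
    (fun r z v => by simp [mul_smul])
    (fun z v w => by simp)
    (fun r z v => smul_comm _ r v))

def imV : Cx V →ₗ[ℝ] V :=
  TensorProduct.lift (LinearMap.mk₂ ℝ (fun z v => z.im • v)
    (fun z w v => by simp [add_smul])
    (fun r z v => by simp [mul_smul])
    (fun z v w => by simp)
    (fun r z v => smul_comm _ r v))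

@[simp] lemma reV_iV (v : V) : reV (iV v) = v := by
  simp [reV, iV]

@[simp] lemma imV_iV (v : V) : imV (iV v) = 0 := by
  simp [imV, iV]

@[simp] lemma reV_I_smul (x : Cx V) : reV (Complex.I • x) = - imV x := by
  induction x using TensorProduct.induction_on with
  | zero => simp
  | tmul z v => simp [reV, imV, TensorProduct.smul_tmul', Complex.mul_re]
  | add x y hx hy => simp only [smul_add, map_add, hx, hy, neg_add]

@[simp] lemma imV_I_smul (x : Cx V) : imV (Complex.I • x) = reV x := by
  induction x using TensorProduct.induction_on with
  | zero => simp
  | tmul z v => simp [reV, imV, TensorProduct.smul_tmul', Complex.mul_im]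
  | add x y hx hy => simp only [smul_add, map_add, hx, hy]

lemma iV_reV_add_I_smul_iV_imV (x : Cx V) : iV (reV x) + Complex.I • iV (imV x) = x := by
  induction x using TensorProduct.induction_on with
  | zero => simp
  | tmul z v =>
    simp only [reV, imV, TensorProduct.lift.tmul, LinearMap.mk₂_apply, iV,
      TensorProduct.mk_apply, TensorProduct.tmul_smul, ← Complex.coe_smul, mul_comm Complex.I,
      TensorProduct.smul_tmul', smul_eq_mul, mul_one]
    rw [← TensorProduct.add_tmul, Complex.re_add_im]
  | add x y hx hy =>
    conv_rhs => rw [← hx, ← hy]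
    simp only [map_add, smul_add]
    abel

lemma dualC_ext {ξ η : DualC V} (h : ∀ v : V, ξ (iV v) = η (iV v)) : ξ = η := by
  refine LinearMap.ext fun x => ?_
  induction x using TensorProduct.induction_on with
  | zero => simp
  | tmul z v =>
    have hz : z ⊗ₜ[ℝ] v = z • iV v := by
      rw [iV, TensorProduct.mk_apply, TensorProduct.smul_tmul', smul_eq_mul, mul_one]
    rw [hz, map_smul, map_smul, h]
  | add x y hx hy => rw [map_add, map_add, hx, hy]

lemma dualExt_apply_iV (α : V →ₗ[ℝ] ℝ) (v : V) : dualExt α (iV v) = (α v : ℂ) := by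
  simp [dualExt, dualExtFun, dualExtAux, iV]

def reD : DualC V →ₗ[ℝ] (V →ₗ[ℝ] ℝ) where
  toFun ξ := (Complex.reLm.comp (ξ.restrictScalars ℝ)).comp iV
  map_add' ξ η := by ext v; simp
  map_smul' r ξ := by ext v; simp

def imD : DualC V →ₗ[ℝ] (V →ₗ[ℝ] ℝ) where
  toFun ξ := (Complex.imLm.comp (ξ.restrictScalars ℝ)).comp iV
  map_add' ξ η := by ext v; simp
  map_smul' r ξ := by ext v; simp

@[simp] lemma reD_dualExt (α : V →ₗ[ℝ] ℝ) : reD (dualExt α) = α := by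
  ext v; simp [reD, dualExt_apply_iV]

@[simp] lemma imD_dualExt (α : V →ₗ[ℝ] ℝ) : imD (dualExt α) = 0 := by
  ext v; simp [imD, dualExt_apply_iV]

@[simp] lemma reD_I_smul (ξ : DualC V) : reD (Complex.I • ξ) = - imD ξ := by
  ext v; simp [reD, imD]

@[simp] lemma imD_I_smul (ξ : DualC V) : imD (Complex.I • ξ) = reD ξ := by
  ext v; simp [reD, imD]

lemma dualExt_reD_add_I_smul_dualExt_imD (ξ : DualC V) :
    dualExt (reD ξ) + Complex.I • dualExt (imD ξ) = ξ := by
  refine dualC_ext fun v => ?_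
  simp only [LinearMap.add_apply, LinearMap.smul_apply, dualExt_apply_iV, smul_eq_mul]
  simp [reD, imD, mul_comm Complex.I, Complex.re_add_im]

def reT : TCx V →ₗ[ℝ] TR V := LinearMap.prodMap reV reD

def imT : TCx V →ₗ[ℝ] TR V := LinearMap.prodMap imV imD

@[simp] lemma reT_iT (a : TR V) : reT (iT a) = a := by
  simp [reT, iT]

@[simp] lemma imT_iT (a : TR V) : imT (iT a) = 0 := by
  simp [imT, iT]

@[simp] lemma reT_I_smul (x : TCx V) : reT (Complex.I • x) = - imT x := by
  simp [reT, imT]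

@[simp] lemma imT_I_smul (x : TCx V) : imT (Complex.I • x) = reT x := by
  simp [imT, reT]

lemma iT_reT_add_I_smul_iT_imT (x : TCx V) : iT (reT x) + Complex.I • iT (imT x) = x :=
  Prod.ext (iV_reV_add_I_smul_iV_imV x.1) (dualExt_reD_add_I_smul_dualExt_imD x.2)

lemma iT_add_I_smul_injective {a b a' b' : TR V}
    (h : iT a + Complex.I • iT b = iT a' + Complex.I • iT b') : a = a' ∧ b = b' := by
  simpa using And.intro (congrArg reT h) (congrArg imT h)

lemma smul_add_I_smul {M : Type*} [AddCommGroup M] [Module ℂ M] (z : ℂ) (x y : M) :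
    z • (x + Complex.I • y) = (z.re • x - z.im • y) + Complex.I • (z.re • y + z.im • x) := by
  simp only [← Complex.coe_smul]
  conv_lhs => rw [← Complex.re_add_im z]
  match_scalars <;> simp [Complex.ext_iff]

lemma smul_iT_add_I_smul (z : ℂ) (a b : TR V) :
    z • (iT a + Complex.I • iT b)
      = iT (z.re • a - z.im • b) + Complex.I • iT (z.re • b + z.im • a) := by
  rw [smul_add_I_smul]
  simp only [map_sub, map_add, map_smul]
  rfl

end RealImaginaryParts

section Pairing

lemma pairR_comm (a b : TR V) : pairR a b = pairR b a := by
  simp [pairR, add_comm]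

def pairBilin : LinearMap.BilinForm ℝ (TR V) :=
  LinearMap.mk₂ ℝ pairR pairR_add_left pairR_smul_left
    (fun a b b' => by rw [pairR_comm, pairR_add_left, pairR_comm b, pairR_comm b'])
    (fun c a b => by rw [pairR_comm, pairR_smul_left, pairR_comm, smul_eq_mul])

@[simp] lemma pairBilin_apply (a b : TR V) : pairBilin a b = pairR a b := rfl

lemma pairBilin_isRefl : (pairBilin (V := V)).IsRefl := fun a b h => by
  rwa [pairBilin_apply, pairR_comm, ← pairBilin_apply]

lemma orthR_eq_orthogonal (W : Submodule ℝ (TR V)) : orthR W = pairBilin.orthogonal W := by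
  ext a
  simp only [LinearMap.BilinForm.mem_orthogonal_iff, pairBilin_apply, pairR_comm _ a]
  rfl

lemma pairBilin_nondegenerate [FiniteDimensional ℝ V] : (pairBilin (V := V)).Nondegenerate := by
  refine (LinearMap.IsRefl.nondegenerate_iff_separatingLeft fun a b => pairBilin_isRefl a b).mpr
    fun a ha => ?_
  have h2 : a.2 = 0 := LinearMap.ext fun y => by
    simpa [pairR] using ha (y, 0)
  have h1 : a.1 = 0 := (Module.forall_dual_apply_eq_zero_iff ℝ a.1).mp fun φ => by
    simpa [pairR, h2] using ha (0, φ)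
  exact Prod.ext h1 h2

lemma orthR_orthR [FiniteDimensional ℝ V] (K : Submodule ℝ (TR V)) : orthR (orthR K) = K := by
  rw [orthR_eq_orthogonal, orthR_eq_orthogonal]
  exact LinearMap.BilinForm.orthogonal_orthogonal pairBilin_nondegenerate pairBilin_isRefl K

lemma pairC_comm (a b : TCx V) : pairC a b = pairC b a := by
  simp [pairC, add_comm]

lemma pairC_add_right (a b b' : TCx V) : pairC a (b + b') = pairC a b + pairC a b' := by
  rw [pairC_comm, pairC_add_left, pairC_comm b, pairC_comm b']

lemma pairC_smul_right (c : ℂ) (a b : TCx V) : pairC a (c • b) = c * pairC a b := by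
  rw [pairC_comm, pairC_smul_left, pairC_comm]

lemma pairC_iT (a b : TR V) : pairC (iT a) (iT b) = (pairR a b : ℂ) := by
  simp only [pairC, pairR, iT, LinearMap.coe_mk, AddHom.coe_mk, dualExt_apply_iV]
  push_cast
  ring

lemma pairC_iT_add_I_smul (u v u' v' : TR V) :
    pairC (iT u + Complex.I • iT v) (iT u' + Complex.I • iT v')
      = (pairR u u' - pairR v v' : ℝ) + Complex.I * (pairR v u' + pairR u v' : ℝ) := by
  rw [pairC_add_left, pairC_add_right, pairC_add_right, pairC_smul_left, pairC_smul_left,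
    pairC_smul_right, pairC_smul_right, pairC_iT, pairC_iT, pairC_iT, pairC_iT]
  push_cast
  ring_nf
  rw [Complex.I_sq]
  ring

end Pairing

section Conjugation

lemma conjT_iT (a : TR V) : conjT (iT a) = iT a := by
  refine Prod.ext (by simp [conjT, conjCx, iT, iV]) (dualC_ext fun v => ?_)
  simp [conjT, conjDual, conjDualFun, iT, dualExt_apply_iV,
    show conjCx (iV v) = iV v by simp [conjCx, iV]]

lemma conjT_iT_add_I_smul (a b : TR V) :
    conjT (iT a + Complex.I • iT b) = iT a + Complex.I • iT (-b) := by
  rw [map_add, conjT_iT, LinearMap.map_smulₛₗ, conjT_iT, Complex.conj_I, map_neg,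
    neg_smul, smul_neg]

lemma conjT_conjT (x : TCx V) : conjT (conjT x) = x := by
  rw [← iT_reT_add_I_smul_iT_imT x, conjT_iT_add_I_smul, conjT_iT_add_I_smul, neg_neg]

lemma mem_conjSub {L : Submodule ℂ (TCx V)} {x : TCx V} : x ∈ conjSub L ↔ conjT x ∈ L :=
  ⟨by rintro ⟨y, hy, rfl⟩; rwa [conjT_conjT], fun h => ⟨conjT x, h, conjT_conjT x⟩⟩

end Conjugation

section Quotient

variable {K : Submodule ℝ (TR V)}

lemma mkK_surjective (K : Submodule ℝ (TR V)) : Function.Surjective (mkK K) :=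
  Submodule.mkQ_surjective _

lemma mkK_eq_zero_iff (x : orthR K) : mkK K x = 0 ↔ (x : TR V) ∈ K := by
  rw [mkK, Submodule.mkQ_apply, Submodule.Quotient.mk_eq_zero, Submodule.mem_comap,
    Submodule.subtype_apply]

lemma IsIsotropicR.le_orthR (hiso : IsIsotropicR K) : K ≤ orthR K :=
  fun a ha b hb => hiso a ha b hb

lemma eq_zero_of_forall_pairing_eq_zero [FiniteDimensional ℝ V]
    {B : quotK K →ₗ[ℝ] quotK K →ₗ[ℝ] ℝ}
    (hB : ∀ x y : ↥(orthR K), B (mkK K x) (mkK K y) = pairR (x : TR V) (y : TR V))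
    {q : quotK K} (h : ∀ q', B q q' = 0) : q = 0 := by
  obtain ⟨w, rfl⟩ := mkK_surjective K q
  have hw : (w : TR V) ∈ orthR (orthR K) := fun y hy => by
    rw [← hB w ⟨y, hy⟩]
    exact h _
  rw [orthR_orthR] at hw
  exact (mkK_eq_zero_iff w).mpr hw

end Quotient

section Complexification

def complexification (K : Submodule ℝ (TR V)) : Submodule ℂ (TCx V) where
  carrier := {x | ∃ a ∈ K, ∃ b ∈ K, x = iT a + Complex.I • iT b}
  zero_mem' := ⟨0, K.zero_mem, 0, K.zero_mem, by simp⟩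
  add_mem' := by
    rintro x y ⟨a, ha, b, hb, rfl⟩ ⟨a', ha', b', hb', rfl⟩
    refine ⟨a + a', K.add_mem ha ha', b + b', K.add_mem hb hb', ?_⟩
    rw [map_add, map_add, smul_add]
    abel
  smul_mem' := by
    rintro z x ⟨a, ha, b, hb, rfl⟩
    exact ⟨z.re • a - z.im • b, K.sub_mem (K.smul_mem _ ha) (K.smul_mem _ hb),
      z.re • b + z.im • a, K.add_mem (K.smul_mem _ hb) (K.smul_mem _ ha),
      smul_iT_add_I_smul z a b⟩

variable {K : Submodule ℝ (TR V)}

lemma iT_mem_complexification {a : TR V} (ha : a ∈ K) : iT a ∈ complexification K :=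
  ⟨a, ha, 0, K.zero_mem, by simp⟩

lemma span_iT_eq_complexification (K : Submodule ℝ (TR V)) :
    Submodule.span ℂ (iT '' (K : Set (TR V))) = complexification K := by
  refine le_antisymm (Submodule.span_le.mpr ?_) ?_
  · rintro x ⟨k, hk, rfl⟩
    exact iT_mem_complexification hk
  · rintro x ⟨a, ha, b, hb, rfl⟩
    exact add_mem (Submodule.subset_span ⟨a, ha, rfl⟩)
      (Submodule.smul_mem _ _ (Submodule.subset_span ⟨b, hb, rfl⟩))

lemma finrank_complexification [FiniteDimensional ℝ V] (K : Submodule ℝ (TR V)) :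
    finrank ℂ (complexification K) = finrank ℝ K := by
  let f : (K × K) →ₗ[ℝ] TCx V :=
    (iT ∘ₗ K.subtype).coprod ((Complex.I • iT) ∘ₗ K.subtype)
  have hf : Function.Injective f := fun p q h => by
    obtain ⟨h1, h2⟩ := iT_add_I_smul_injective h
    exact Prod.ext (Subtype.ext h1) (Subtype.ext h2)
  have hrange : LinearMap.range f = (complexification K).restrictScalars ℝ := by
    ext x
    constructor
    · rintro ⟨p, rfl⟩
      exact ⟨p.1, p.1.2, p.2, p.2.2, rfl⟩
    · rintro ⟨a, ha, b, hb, rfl⟩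
      exact ⟨(⟨a, ha⟩, ⟨b, hb⟩), rfl⟩
  have : Module.Free ℝ K := Module.Free.of_divisionRing ℝ K
  have hreal : finrank ℝ (complexification K) = 2 * finrank ℝ K := by
    rw [← ((Submodule.restrictScalarsEquiv ℝ ℂ (TCx V) _).restrictScalars ℝ).finrank_eq,
      ← hrange, LinearMap.finrank_range_of_inj hf, Module.finrank_prod, two_mul]
  have htower := Module.finrank_mul_finrank ℝ ℂ (complexification K)
  rw [Complex.finrank_real_complex] at htower
  omega

end Complexification

section Lagrangian

variable {K : Submodule ℝ (TR V)} {J : quotK K →ₗ[ℝ] quotK K}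

lemma J_mkK_eq_of_J_mkK_eq_neg (hJ2 : ∀ q : quotK K, J (J q) = -q) {u v : orthR K}
    (h : J (mkK K u) = -mkK K v) : J (mkK K v) = mkK K u := by
  rw [← neg_eq_iff_eq_neg.mpr h, map_neg, hJ2, neg_neg]

variable (K J) in
/-- The preimage in `(K^⊥)_ℂ` of the `+i`-eigenspace of `J_ℂ`. -/
def lagOf (hJ2 : ∀ q : quotK K, J (J q) = -q) : Submodule ℂ (TCx V) where
  carrier := {x | ∃ u v : orthR K,
    J (mkK K u) = -mkK K v ∧ x = iT (u : TR V) + Complex.I • iT (v : TR V)}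
  zero_mem' := ⟨0, 0, by simp, by simp⟩
  add_mem' := by
    rintro x y ⟨u, v, hJx, rfl⟩ ⟨u', v', hJy, rfl⟩
    refine ⟨u + u', v + v', ?_, ?_⟩
    · rw [map_add, map_add, map_add, hJx, hJy, neg_add]
    · simp only [Submodule.coe_add, map_add, smul_add]
      abel
  smul_mem' := by
    rintro z x ⟨u, v, hJx, rfl⟩
    refine ⟨z.re • u - z.im • v, z.re • v + z.im • u, ?_, ?_⟩
    · simp only [map_sub, map_add, map_smul, hJx, J_mkK_eq_of_J_mkK_eq_neg hJ2 hJx, smul_neg]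
      abel
    · push_cast
      exact smul_iT_add_I_smul z (u : TR V) v

lemma mem_lagOf_iff (hJ2 : ∀ q : quotK K, J (J q) = -q) {u v : TR V}
    (hu : u ∈ orthR K) (hv : v ∈ orthR K) :
    iT u + Complex.I • iT v ∈ lagOf K J hJ2 ↔ J (mkK K ⟨u, hu⟩) = -mkK K ⟨v, hv⟩ := by
  constructor
  · rintro ⟨u', v', hJ, heq⟩
    obtain ⟨rfl, rfl⟩ := iT_add_I_smul_injective heq
    exact hJ
  · intro h
    exact ⟨⟨u, hu⟩, ⟨v, hv⟩, h, rfl⟩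

lemma complexification_le_lagOf (hiso : IsIsotropicR K) (hJ2 : ∀ q : quotK K, J (J q) = -q) :
    complexification K ≤ lagOf K J hJ2 := by
  rintro x ⟨a, ha, b, hb, rfl⟩
  rw [mem_lagOf_iff hJ2 (hiso.le_orthR ha) (hiso.le_orthR hb),
    (mkK_eq_zero_iff _).mpr ha, (mkK_eq_zero_iff _).mpr hb, map_zero, neg_zero]

lemma lagOf_inf_conjSub (hiso : IsIsotropicR K) (hJ2 : ∀ q : quotK K, J (J q) = -q) :
    lagOf K J hJ2 ⊓ conjSub (lagOf K J hJ2) = complexification K := by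
  refine le_antisymm ?_ fun x hx => ⟨complexification_le_lagOf hiso hJ2 hx, ?_⟩
  · rintro x ⟨⟨u, v, hJ, rfl⟩, hconj⟩
    rw [SetLike.mem_coe, mem_conjSub, conjT_iT_add_I_smul,
      mem_lagOf_iff hJ2 u.2 (neg_mem v.2)] at hconj
    have hJ' : J (mkK K u) = mkK K v := by
      rw [← neg_neg (mkK K v), ← map_neg]
      exact hconj
    have : IsAddTorsionFree (quotK K) := .of_isTorsionFree ℝ _
    have hv : mkK K v = 0 := self_eq_neg.mp (hJ'.symm.trans hJ)
    have hu : mkK K u = 0 := by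
      rw [← neg_eq_zero, ← hJ2, hJ', hv, map_zero]
    exact ⟨u, (mkK_eq_zero_iff u).mp hu, v, (mkK_eq_zero_iff v).mp hv, rfl⟩
  · obtain ⟨a, ha, b, hb, rfl⟩ := hx
    rw [SetLike.mem_coe, mem_conjSub, conjT_iT_add_I_smul]
    exact complexification_le_lagOf hiso hJ2 ⟨a, ha, -b, neg_mem hb, rfl⟩

lemma reT_mem_orthR_and_imT_mem_orthR {L : Submodule ℂ (TCx V)}
    (hKL : complexification K ≤ L) {x : TCx V} (hx : x ∈ orthC L) :
    reT x ∈ orthR K ∧ imT x ∈ orthR K := by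
  have hparts : ∀ k ∈ K, pairR (reT x) k = 0 ∧ pairR (imT x) k = 0 := fun k hk => by
    have h := hx (iT k) (hKL (iT_mem_complexification hk))
    rw [← iT_reT_add_I_smul_iT_imT x, pairC_add_left, pairC_smul_left, pairC_iT,
      pairC_iT] at h
    simpa [Complex.ext_iff] using h
  exact ⟨fun k hk => (hparts k hk).1, fun k hk => (hparts k hk).2⟩

lemma eq_lagOf_of_isLagrangianC (hJ2 : ∀ q : quotK K, J (J q) = -q)
    {L : Submodule ℂ (TCx V)} (hlag : IsLagrangianC L) (hKL : complexification K ≤ L)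
    (hcond : ∀ (u v : TR V) (hu : u ∈ orthR K) (hv : v ∈ orthR K),
      (iT u + Complex.I • iT v ∈ L ↔ J (mkK K ⟨u, hu⟩) = - mkK K ⟨v, hv⟩)) :
    L = lagOf K J hJ2 := by
  ext x
  constructor
  · intro hx
    obtain ⟨hu, hv⟩ := reT_mem_orthR_and_imT_mem_orthR hKL (hlag ▸ hx)
    rw [← iT_reT_add_I_smul_iT_imT x] at hx ⊢
    exact (mem_lagOf_iff hJ2 hu hv).mpr ((hcond _ _ hu hv).mp hx)
  · rintro ⟨u, v, hJ, rfl⟩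
    exact (hcond u v u.2 v.2).mpr hJ

variable {B : quotK K →ₗ[ℝ] quotK K →ₗ[ℝ] ℝ}

lemma lagOf_le_orthC
    (hB : ∀ x y : ↥(orthR K), B (mkK K x) (mkK K y) = pairR (x : TR V) (y : TR V))
    (hJ2 : ∀ q : quotK K, J (J q) = -q)
    (hJskew : ∀ q q' : quotK K, B (J q) q' + B q (J q') = 0) :
    lagOf K J hJ2 ≤ orthC (lagOf K J hJ2) := by
  rintro _ ⟨u, v, hJ, rfl⟩ _ ⟨u', v', hJ', rfl⟩
  have hv : mkK K v = -J (mkK K u) := by rw [hJ, neg_neg]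
  have hv' : mkK K v' = -J (mkK K u') := by rw [hJ', neg_neg]
  have hre : pairR (u : TR V) u' - pairR (v : TR V) v' = 0 := by
    have h := hJskew (mkK K u) (J (mkK K u'))
    rw [hJ2] at h
    rw [← hB, ← hB, hv, hv']
    simp only [map_neg, LinearMap.neg_apply, neg_neg] at h ⊢
    linarith
  have him : pairR (v : TR V) u' + pairR (u : TR V) v' = 0 := by
    have h := hJskew (mkK K u) (mkK K u')
    rw [← hB, ← hB, hv, hv']
    simp only [map_neg, LinearMap.neg_apply] at h ⊢
    linarith
  rw [pairC_iT_add_I_smul, hre, him]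
  simp

variable [FiniteDimensional ℝ V]

lemma orthC_lagOf_le (hiso : IsIsotropicR K)
    (hB : ∀ x y : ↥(orthR K), B (mkK K x) (mkK K y) = pairR (x : TR V) (y : TR V))
    (hJ2 : ∀ q : quotK K, J (J q) = -q)
    (hJskew : ∀ q q' : quotK K, B (J q) q' + B q (J q') = 0) :
    orthC (lagOf K J hJ2) ≤ lagOf K J hJ2 := by
  intro x hx
  obtain ⟨hu, hv⟩ := reT_mem_orthR_and_imT_mem_orthR (complexification_le_lagOf hiso hJ2) hx
  rw [← iT_reT_add_I_smul_iT_imT x, mem_lagOf_iff hJ2 hu hv, ← add_eq_zero_iff_eq_neg]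
  refine eq_zero_of_forall_pairing_eq_zero hB fun q' => ?_
  obtain ⟨u', rfl⟩ := mkK_surjective K q'
  obtain ⟨v', hv'⟩ := mkK_surjective K (-J (mkK K u'))
  have hmem : iT (u' : TR V) + Complex.I • iT (v' : TR V) ∈ lagOf K J hJ2 :=
    ⟨u', v', by rw [hv', neg_neg], rfl⟩
  have h := hx _ hmem
  rw [← iT_reT_add_I_smul_iT_imT x, pairC_iT_add_I_smul] at h
  have him : pairR (imT x) u' + pairR (reT x) v' = 0 := by simpa using congrArg Complex.im h
  have hskew := hJskew (mkK K ⟨reT x, hu⟩) (mkK K u')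
  rw [show J (mkK K u') = -mkK K v' by rw [hv', neg_neg], map_neg, hB] at hskew
  rw [map_add, LinearMap.add_apply, hB]
  linarith

lemma isLagrangianC_lagOf (hiso : IsIsotropicR K)
    (hB : ∀ x y : ↥(orthR K), B (mkK K x) (mkK K y) = pairR (x : TR V) (y : TR V))
    (hJ2 : ∀ q : quotK K, J (J q) = -q)
    (hJskew : ∀ q q' : quotK K, B (J q) q' + B q (J q') = 0) :
    IsLagrangianC (lagOf K J hJ2) :=
  le_antisymm (lagOf_le_orthC hB hJ2 hJskew) (orthC_lagOf_le hiso hB hJ2 hJskew)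

end Lagrangian

end CDirac

theorem stmt12_general (V : Type*) [AddCommGroup V] [Module ℝ V] [FiniteDimensional ℝ V]
    (r : ℕ)
    (K : Submodule ℝ (TR V)) (hiso : IsIsotropicR K) (hr : finrank ℝ ↥K = r)
    -- the induced pairing on `K^⊥/K`
    (B : quotK K →ₗ[ℝ] quotK K →ₗ[ℝ] ℝ)
    (hB : ∀ x y : ↥(orthR K), B (mkK K x) (mkK K y) = pairR (x : TR V) (y : TR V))
    -- the complex structure `J`
    (J : quotK K →ₗ[ℝ] quotK K)
    (hJ2 : ∀ q : quotK K, J (J q) = -q)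
    (hJskew : ∀ q q' : quotK K, B (J q) q' + B q (J q') = 0) :
    (∃! L : Submodule ℂ (TCx V),
      IsLagrangianC L ∧
      L ⊓ conjSub L = Submodule.span ℂ (iT '' (K : Set (TR V))) ∧
      (∀ (u v : TR V) (hu : u ∈ orthR K) (hv : v ∈ orthR K),
        (iT u + Complex.I • iT v ∈ L ↔ J (mkK K ⟨u, hu⟩) = - mkK K ⟨v, hv⟩))) ∧
    ∀ L : Submodule ℂ (TCx V),
      (IsLagrangianC L ∧
       L ⊓ conjSub L = Submodule.span ℂ (iT '' (K : Set (TR V))) ∧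
       (∀ (u v : TR V) (hu : u ∈ orthR K) (hv : v ∈ orthR K),
         (iT u + Complex.I • iT v ∈ L ↔ J (mkK K ⟨u, hu⟩) = - mkK K ⟨v, hv⟩))) →
      finrank ℂ ↥(L ⊓ conjSub L) = r := by
  rw [span_iT_eq_complexification]
  refine ⟨⟨lagOf K J hJ2, ⟨isLagrangianC_lagOf hiso hB hJ2 hJskew,
    lagOf_inf_conjSub hiso hJ2, fun u v hu hv => mem_lagOf_iff hJ2 hu hv⟩, ?_⟩, ?_⟩
  · rintro L ⟨hlag, hinter, hcond⟩
    exact eq_lagOf_of_isLagrangianC hJ2 hlag (hinter ▸ inf_le_left) hcond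
  · rintro L ⟨-, hinter, -⟩
    rw [hinter, finrank_complexification, hr]

/-- Given an isotropic `K ⊆ 𝕋V` of dimension `r` and a skew complex
structure `J` on `K^⊥/K`, there is a unique lagrangian `L ⊆ 𝕋_ℂV` with `L ∩ L̄ = K_ℂ`
whose image in `(K^⊥/K)_ℂ` is the `+i`-eigenspace of the complexification of `J`;
in particular such `L` has real index `r`. -/
theorem stmt12 (V : Type*) [AddCommGroup V] [Module ℝ V] [FiniteDimensional ℝ V]
    (m r : ℕ) (hm : m = finrank ℝ V)
    (K : Submodule ℝ (TR V)) (hiso : IsIsotropicR K) (hr : finrank ℝ ↥K = r)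
    -- the induced pairing on `K^⊥/K`
    (B : quotK K →ₗ[ℝ] quotK K →ₗ[ℝ] ℝ)
    (hB : ∀ x y : ↥(orthR K), B (mkK K x) (mkK K y) = pairR (x : TR V) (y : TR V))
    -- the complex structure `J`
    (J : quotK K →ₗ[ℝ] quotK K)
    (hJ2 : ∀ q : quotK K, J (J q) = -q)
    (hJskew : ∀ q q' : quotK K, B (J q) q' + B q (J q') = 0) :
    (∃! L : Submodule ℂ (TCx V),
      IsLagrangianC L ∧
      L ⊓ conjSub L = Submodule.span ℂ (iT '' (K : Set (TR V))) ∧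
      (∀ (u v : TR V) (hu : u ∈ orthR K) (hv : v ∈ orthR K),
        (iT u + Complex.I • iT v ∈ L ↔ J (mkK K ⟨u, hu⟩) = - mkK K ⟨v, hv⟩))) ∧
    ∀ L : Submodule ℂ (TCx V),
      (IsLagrangianC L ∧
       L ⊓ conjSub L = Submodule.span ℂ (iT '' (K : Set (TR V))) ∧
       (∀ (u v : TR V) (hu : u ∈ orthR K) (hv : v ∈ orthR K),
         (iT u + Complex.I • iT v ∈ L ↔ J (mkK K ⟨u, hu⟩) = - mkK K ⟨v, hv⟩))) →
      finrank ℂ ↥(L ⊓ conjSub L) = r :=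
  stmt12_general V r K hiso hr B hB J hJ2 hJskew
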